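/- arXiv:cs/0209033 — 3 statements merged into one kernel-verified Lean document; each statement's English description precedes it below -/
import Mathlib

section
/- For every k in {0,…,n} and all indices i,j with r_i ≤ r_j, there exists a (k,r_i,r_j)-feasible set J of jobs with total weight w(J) = F^k_{i,j}. -/
open Finset

/-- `S` is a (preemptive) schedule: each job is executed only at integer time
units inside its window `[r_j, d_j)`, and at most one job is executed at a time. -/
def IsSchedule (n : ℕ) (r d : Fin n → ℤ) (S : Fin n → Finset ℤ) : Prop :=
  (∀ j, ∀ t ∈ S j, r j ≤ t ∧ t < d j) ∧
  (∀ i j : Fin n, i ≠ j → Disjoint (S i) (S j))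

/-- `S` is a full schedule of the job set `J` (it completes every job of `J` and
executes no other job) using only time units in `[x, y)`. -/
def IsFullScheduleIn (n : ℕ) (r d : Fin n → ℤ) (p : ℕ)
    (J : Finset (Fin n)) (S : Fin n → Finset ℤ) (x y : ℤ) : Prop :=
  IsSchedule n r d S ∧
  (∀ j ∈ J, (S j).card = p) ∧
  (∀ j, j ∉ J → S j = ∅) ∧
  (∀ j, ∀ t ∈ S j, x ≤ t ∧ t < y)

/-- `J` is feasible: some schedule completes every job of `J`. -/
def Feasible (n : ℕ) (r d : Fin n → ℤ) (p : ℕ) (J : Finset (Fin n)) : Prop :=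
  ∃ S : Fin n → Finset ℤ, IsSchedule n r d S ∧ ∀ j ∈ J, (S j).card = p

/-- `J` is `(k, x, y)`-feasible.  Jobs are `0`-indexed (`j : Fin n` is job `j+1`
of the paper), so the paper's `J ⊆ {1, …, k}` reads `∀ j ∈ J, (j : ℕ) < k`. -/
def KFeasible (n : ℕ) (r d : Fin n → ℤ) (p : ℕ) (k : ℕ) (x y : ℤ)
    (J : Finset (Fin n)) : Prop :=
  (∀ j ∈ J, (j : ℕ) < k) ∧
  (∀ j ∈ J, x ≤ r j ∧ r j < y) ∧
  ∃ S : Fin n → Finset ℤ, IsFullScheduleIn n r d p J S x y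

/-- Total weight `w(J)` of a set of jobs. -/
def weight (n : ℕ) (w : Fin n → ℤ) (J : Finset (Fin n)) : ℤ := ∑ j ∈ J, w j

/-- Weighted throughput of a schedule: total weight of the completed jobs. -/
def throughput (n : ℕ) (w : Fin n → ℤ) (p : ℕ) (S : Fin n → Finset ℤ) : ℤ :=
  ∑ j ∈ Finset.univ.filter (fun j => (S j).card = p), w j

/-- `Δ(x, y) = min(n, ⌈(y-x)/p⌉ - 1)`. -/
def Delta (n p : ℕ) (x y : ℤ) : ℕ :=
  min n (Int.toNat (⌈((y - x : ℤ) : ℚ) / (p : ℚ)⌉ - 1))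

/-- `lam x` (the paper's `λ(x)`) is a job whose release time is minimum among
those with release time `≥ x` (whenever such a job exists). -/
def IsLam (n : ℕ) (r : Fin n → ℤ) (lam : ℤ → Fin n) : Prop :=
  ∀ x : ℤ, (∃ i, x ≤ r i) → x ≤ r (lam x) ∧ ∀ i, x ≤ r i → r (lam x) ≤ r i

/-- `lamp x` (the paper's `λ⁺(x)`) is a job whose release time is minimum among
those with release time `> x` (whenever such a job exists). -/
def IsLamPlus (n : ℕ) (r : Fin n → ℤ) (lamp : ℤ → Fin n) : Prop :=
  ∀ x : ℤ, (∃ i, x < r i) → x < r (lamp x) ∧ ∀ i, x < r i → r (lamp x) ≤ r i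

/-- The defining recurrence of the table `F`:
`F^k_{i,j} = 0` if `r_i = r_j`, and otherwise `F^k_{i,j}` is the maximum of
(F1) `F^k_{λ⁺(r_i), j}` and
(F2) `G^k_{i,a} + F^k_{λ(r_i + ap), j}` over `1 ≤ a ≤ n` with `r_i + ap ≤ r_j`. -/
def FRec (n : ℕ) (r : Fin n → ℤ) (p : ℕ) (lam lamp : ℤ → Fin n)
    (F : ℕ → Fin n → Fin n → ℤ) (G : ℕ → Fin n → ℕ → ℤ) : Prop :=
  (∀ k ≤ n, ∀ i j : Fin n, r i = r j → F k i j = 0) ∧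
  (∀ k ≤ n, ∀ i j : Fin n, r i < r j →
    IsGreatest
      (insert (F k (lamp (r i)) j)
        {v : ℤ | ∃ a : ℕ, 1 ≤ a ∧ a ≤ n ∧ r i + (a : ℤ) * (p : ℤ) ≤ r j ∧
          v = G k i a + F k (lam (r i + (a : ℤ) * (p : ℤ))) j})
      (F k i j))

/-- The defining recurrence of the table `G` (the paper's job `k` of table index
`k` is `⟨k-1, _⟩ : Fin n`; we state the recurrence as `G^{k+1}` vs `G^k`, the
paper's job `k+1` being `⟨k, _⟩ : Fin n`):
`G^k_{i,a} = 0` if `k = 0` or `a = 0`;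
`G^k_{i,a} = G^{k-1}_{i,a}` if `r_k ∉ [r_i, r_i + (a-1)p]` or `d_k < r_i + ap`;
otherwise `G^k_{i,a}` is the maximum of
(G1) `G^{k-1}_{i,a}`, (G2) `G^{k-1}_{i,a-1} + w_k`, and
(G3) `H^{k-1}_{i,l} + G^{k-1}_{l, Δ(r_l, r_i + ap)} + w_k` over `l` with
`r_k < r_l < r_i + ap`. -/
def GRec (n : ℕ) (r d w : Fin n → ℤ) (p : ℕ)
    (F : ℕ → Fin n → Fin n → ℤ) (G : ℕ → Fin n → ℕ → ℤ)
    (H : ℕ → Fin n → Fin n → ℤ) : Prop :=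
  (∀ k a : ℕ, ∀ i : Fin n, k = 0 ∨ a = 0 → G k i a = 0) ∧
  (∀ k a : ℕ, ∀ hk : k < n, ∀ i : Fin n, 1 ≤ a → a ≤ n →
    (¬ (r i ≤ r ⟨k, hk⟩ ∧ r ⟨k, hk⟩ ≤ r i + ((a : ℤ) - 1) * (p : ℤ)) ∨
      d ⟨k, hk⟩ < r i + (a : ℤ) * (p : ℤ)) →
    G (k + 1) i a = G k i a) ∧
  (∀ k a : ℕ, ∀ hk : k < n, ∀ i : Fin n, 1 ≤ a → a ≤ n →
    r i ≤ r ⟨k, hk⟩ → r ⟨k, hk⟩ ≤ r i + ((a : ℤ) - 1) * (p : ℤ) →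
    r i + (a : ℤ) * (p : ℤ) ≤ d ⟨k, hk⟩ →
    IsGreatest
      (insert (G k i a) (insert (G k i (a - 1) + w ⟨k, hk⟩)
        {v : ℤ | ∃ l : Fin n, r ⟨k, hk⟩ < r l ∧ r l < r i + (a : ℤ) * (p : ℤ) ∧
          v = H k i l + G k l (Delta n p (r l) (r i + (a : ℤ) * (p : ℤ))) + w ⟨k, hk⟩}))
      (G (k + 1) i a))

/-- The defining recurrence of the table `H` (defined for `k < n` and
`r_i ≤ r_{k+1} ≤ r_j`; the paper's job `k+1` is `⟨k, _⟩ : Fin n`):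
`H^k_{i,j} = 0` if `r_i = r_j`, and otherwise `H^k_{i,j}` is the maximum of
`G^k_{i,a} + F^k_{λ(r_i + ap), j}` over `0 ≤ a ≤ n` with
`r_{k+1} ≤ r_i + ap ≤ r_j`. -/
def HRec (n : ℕ) (r : Fin n → ℤ) (p : ℕ) (lam : ℤ → Fin n)
    (F : ℕ → Fin n → Fin n → ℤ) (G : ℕ → Fin n → ℕ → ℤ)
    (H : ℕ → Fin n → Fin n → ℤ) : Prop :=
  (∀ k : ℕ, ∀ hk : k < n, ∀ i j : Fin n, r i ≤ r ⟨k, hk⟩ → r ⟨k, hk⟩ ≤ r j →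
    r i = r j → H k i j = 0) ∧
  (∀ k : ℕ, ∀ hk : k < n, ∀ i j : Fin n, r i ≤ r ⟨k, hk⟩ → r ⟨k, hk⟩ ≤ r j →
    r i < r j →
    IsGreatest
      {v : ℤ | ∃ a : ℕ, a ≤ n ∧ r ⟨k, hk⟩ ≤ r i + (a : ℤ) * (p : ℤ) ∧
        r i + (a : ℤ) * (p : ℤ) ≤ r j ∧
        v = G k i a + F k (lam (r i + (a : ℤ) * (p : ℤ))) j}
      (H k i j))


section helpers
variable {n : ℕ} {r d : Fin n → ℤ} {p : ℕ}

lemma full_empty (x y : ℤ) : IsFullScheduleIn n r d p ∅ (fun _ => ∅) x y := by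
  refine ⟨⟨fun j t ht => absurd ht (by simp), fun i j _ => by simp⟩, ?_, ?_, ?_⟩ <;> simp

lemma kfeas_empty (k : ℕ) (x y : ℤ) : KFeasible n r d p k x y ∅ :=
  ⟨by simp, by simp, _, full_empty x y⟩

lemma kfeas_mono {k k' : ℕ} {x x' y y' : ℤ} {J : Finset (Fin n)}
    (h : KFeasible n r d p k x y J)
    (hk : k ≤ k') (hx : x' ≤ x) (hy : y ≤ y') : KFeasible n r d p k' x' y' J := by
  obtain ⟨h1, h2, S, hS1, hS2, hS3, hS4⟩ := h
  exact ⟨fun j hj => lt_of_lt_of_le (h1 j hj) hk,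
    fun j hj => ⟨le_trans hx (h2 j hj).1, lt_of_lt_of_le (h2 j hj).2 hy⟩,
    S, hS1, hS2, hS3, fun j t ht => ⟨le_trans hx (hS4 j t ht).1, lt_of_lt_of_le (hS4 j t ht).2 hy⟩⟩

lemma full_mono {J : Finset (Fin n)} {S : Fin n → Finset ℤ} {x x' y y' : ℤ}
    (h : IsFullScheduleIn n r d p J S x y) (hx : x' ≤ x) (hy : y ≤ y') :
    IsFullScheduleIn n r d p J S x' y' :=
  ⟨h.1, h.2.1, h.2.2.1, fun j t ht =>
    ⟨le_trans hx (h.2.2.2 j t ht).1, lt_of_lt_of_le (h.2.2.2 j t ht).2 hy⟩⟩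

lemma full_union {J1 J2 : Finset (Fin n)} {S1 S2 : Fin n → Finset ℤ} {x1 y1 x2 y2 : ℤ}
    (h1 : IsFullScheduleIn n r d p J1 S1 x1 y1)
    (h2 : IsFullScheduleIn n r d p J2 S2 x2 y2)
    (hJ : Disjoint J1 J2) (h12 : y1 ≤ x2) (hx : x1 ≤ x2) (hy : y1 ≤ y2) :
    IsFullScheduleIn n r d p (J1 ∪ J2) (fun j => S1 j ∪ S2 j) x1 y2 := by
  obtain ⟨⟨w1, d1⟩, c1, e1, t1⟩ := h1
  obtain ⟨⟨w2, d2⟩, c2, e2, t2⟩ := h2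
  have cross : ∀ i j, Disjoint (S1 i) (S2 j) := by
    intro i j
    rw [Finset.disjoint_left]
    intro t ht ht2
    have ha := (t1 i t ht).2
    have hb := (t2 j t ht2).1
    omega
  refine ⟨⟨?_, ?_⟩, ?_, ?_, ?_⟩ <;> simp only []
  · intro j t ht
    rcases Finset.mem_union.1 ht with h | h
    · exact w1 j t h
    · exact w2 j t h
  · intro i j hij
    simp only [Finset.disjoint_union_left, Finset.disjoint_union_right]
    exact ⟨⟨d1 i j hij, (cross j i).symm⟩, cross i j, d2 i j hij⟩
  · intro j hj
    rcases Finset.mem_union.1 hj with h | h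
    · rw [e2 j (Finset.disjoint_left.1 hJ h), Finset.union_empty]; exact c1 j h
    · rw [e1 j (Finset.disjoint_right.1 hJ h), Finset.empty_union]; exact c2 j h
  · intro j hj
    rw [Finset.mem_union, not_or] at hj
    rw [e1 j hj.1, e2 j hj.2, Finset.union_empty]
  · intro j t ht
    rcases Finset.mem_union.1 ht with h | h
    · have := t1 j t h; constructor <;> omega
    · have := t2 j t h; constructor <;> omega

lemma kfeas_union {k : ℕ} {J1 J2 : Finset (Fin n)} {x1 y1 x2 y2 : ℤ}
    (h1 : KFeasible n r d p k x1 y1 J1) (h2 : KFeasible n r d p k x2 y2 J2)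
    (h12 : y1 ≤ x2) (hx : x1 ≤ x2) (hy : y1 ≤ y2) :
    KFeasible n r d p k x1 y2 (J1 ∪ J2) ∧ Disjoint J1 J2 := by
  obtain ⟨a1, b1, S1, hS1⟩ := h1
  obtain ⟨a2, b2, S2, hS2⟩ := h2
  have hJ : Disjoint J1 J2 := by
    rw [Finset.disjoint_left]; intro j hj hj2
    have := (b1 j hj).2; have := (b2 j hj2).1; omega
  refine ⟨⟨?_, ?_, _, full_union hS1 hS2 hJ h12 hx hy⟩, hJ⟩
  · intro j hj; rcases Finset.mem_union.1 hj with h | h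
    exacts [a1 j h, a2 j h]
  · intro j hj; rcases Finset.mem_union.1 hj with h | h
    · have := b1 j h; constructor <;> omega
    · have := b2 j h; constructor <;> omega

lemma full_insert {J : Finset (Fin n)} {S : Fin n → Finset ℤ} {x y : ℤ}
    (m : Fin n) (hm : m ∉ J) (T : Finset ℤ)
    (hcard : T.card = p)
    (hwin : ∀ t ∈ T, r m ≤ t ∧ t < d m)
    (hxy : ∀ t ∈ T, x ≤ t ∧ t < y)
    (hdisj : ∀ j, Disjoint T (S j))
    (h : IsFullScheduleIn n r d p J S x y) :
    IsFullScheduleIn n r d p (insert m J) (Function.update S m T) x y := by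
  obtain ⟨⟨w1, d1⟩, c1, e1, t1⟩ := h
  refine ⟨⟨?_, ?_⟩, ?_, ?_, ?_⟩
  · intro j t ht
    by_cases hj : j = m
    · subst hj; rw [Function.update_self] at ht; exact hwin t ht
    · rw [Function.update_of_ne hj] at ht; exact w1 j t ht
  · intro i j hij
    by_cases hi : i = m
    · subst hi
      rw [Function.update_self, Function.update_of_ne (Ne.symm hij)]
      exact hdisj j
    · by_cases hj : j = m
      · subst hj
        rw [Function.update_self, Function.update_of_ne hi]
        exact (hdisj i).symm
      · rw [Function.update_of_ne hi, Function.update_of_ne hj]; exact d1 i j hij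
  · intro j hj
    rcases Finset.mem_insert.1 hj with h | h
    · subst h; rw [Function.update_self]; exact hcard
    · rw [Function.update_of_ne (by rintro rfl; exact hm h)]; exact c1 j h
  · intro j hj
    rw [Finset.mem_insert, not_or] at hj
    rw [Function.update_of_ne hj.1]; exact e1 j hj.2
  · intro j t ht
    by_cases hj : j = m
    · subst hj; rw [Function.update_self] at ht; exact hxy t ht
    · rw [Function.update_of_ne hj] at ht; exact t1 j t ht

lemma sched_units {J : Finset (Fin n)} {S : Fin n → Finset ℤ} {x y : ℤ}
    (h : IsFullScheduleIn n r d p J S x y) :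
    (Finset.univ.biUnion S).card = J.card * p ∧
      Finset.univ.biUnion S ⊆ Finset.Ico x y := by
  obtain ⟨⟨w1, d1⟩, c1, e1, t1⟩ := h
  constructor
  · rw [Finset.card_biUnion (fun i _ j _ hij => d1 i j hij)]
    rw [← Finset.sum_subset (Finset.subset_univ J)
      (by intro j _ hj; rw [e1 j hj, Finset.card_empty])]
    rw [Finset.sum_congr rfl (fun j hj => c1 j hj), Finset.sum_const, smul_eq_mul]
  · intro t ht
    obtain ⟨j, _, hj⟩ := Finset.mem_biUnion.1 ht
    exact Finset.mem_Ico.2 (t1 j t hj)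

lemma sched_card_le {J : Finset (Fin n)} {S : Fin n → Finset ℤ} {x y : ℤ}
    (h : IsFullScheduleIn n r d p J S x y) (hxy : x ≤ y) :
    (J.card : ℤ) * p ≤ y - x := by
  obtain ⟨h1, h2⟩ := sched_units h
  have hle := Finset.card_le_card h2
  rw [h1, Int.card_Ico] at hle
  rw [← Int.toNat_of_nonneg (by omega : (0:ℤ) ≤ y - x)]
  exact_mod_cast hle

end helpers

lemma FfromG
    (n : ℕ) (r d w : Fin n → ℤ) (p : ℕ) (hp : 1 ≤ p)
    (lam lamp : ℤ → Fin n) (hlam : IsLam n r lam) (hlamp : IsLamPlus n r lamp)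
    (F : ℕ → Fin n → Fin n → ℤ) (G : ℕ → Fin n → ℕ → ℤ)
    (hF : FRec n r p lam lamp F G)
    (k : ℕ) (hk : k ≤ n)
    (hPG : ∀ (i : Fin n) (a : ℕ), a ≤ n →
      ∃ J, KFeasible n r d p k (r i) (r i + (a : ℤ) * (p : ℤ)) J ∧ weight n w J = G k i a) :
    ∀ (i j : Fin n), r i ≤ r j →
      ∃ J, KFeasible n r d p k (r i) (r j) J ∧ weight n w J = F k i j := by
  obtain ⟨hF0, hFrec⟩ := hF
  suffices H : ∀ (m : ℕ) (i j : Fin n), r i ≤ r j → (r j - r i).toNat ≤ m →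
      ∃ J, KFeasible n r d p k (r i) (r j) J ∧ weight n w J = F k i j by
    exact fun i j hij => H (r j - r i).toNat i j hij le_rfl
  intro m
  induction m with
  | zero =>
    intro i j hij hm
    have heq : r i = r j := by omega
    exact ⟨∅, kfeas_empty _ _ _, by simp [weight, hF0 k hk i j heq]⟩
  | succ m ih =>
    intro i j hij hm
    rcases eq_or_lt_of_le hij with heq | hlt
    · exact ⟨∅, kfeas_empty _ _ _, by simp [weight, hF0 k hk i j heq]⟩
    have hgr := hFrec k hk i j hlt
    rcases Set.mem_insert_iff.1 hgr.1 with h | h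
    · -- F1
      have hlp := hlamp (r i) ⟨j, hlt⟩
      have h1 : r i < r (lamp (r i)) := hlp.1
      have h2 : r (lamp (r i)) ≤ r j := hlp.2 j hlt
      obtain ⟨J, hJ, hw⟩ := ih (lamp (r i)) j h2 (by omega)
      exact ⟨J, kfeas_mono hJ le_rfl (le_of_lt h1) le_rfl, by rw [hw, h]⟩
    · -- F2
      obtain ⟨a, ha1, han, hale, heq⟩ := h
      have hap : (1 : ℤ) ≤ (a : ℤ) * (p : ℤ) := by
        have h1 : (1:ℤ) ≤ (a:ℤ) := by exact_mod_cast ha1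
        have h2 : (1:ℤ) ≤ (p:ℤ) := by exact_mod_cast hp
        nlinarith
      have hti : r i < r i + (a : ℤ) * (p : ℤ) := by omega
      have hlm := hlam (r i + (a : ℤ) * (p : ℤ)) ⟨j, hale⟩
      have h1 : r i + (a : ℤ) * (p : ℤ) ≤ r (lam (r i + (a : ℤ) * (p : ℤ))) := hlm.1
      have h2 : r (lam (r i + (a : ℤ) * (p : ℤ))) ≤ r j := hlm.2 j hale
      obtain ⟨J1, hJ1, hw1⟩ := hPG i a han
      obtain ⟨J2, hJ2, hw2⟩ := ih (lam (r i + (a : ℤ) * (p : ℤ))) j h2 (by omega)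
      obtain ⟨hU, hdisj⟩ := kfeas_union hJ1 hJ2 h1 (by omega) (le_trans h1 h2)
      refine ⟨J1 ∪ J2, hU, ?_⟩
      rw [weight, Finset.sum_union hdisj, ← weight, ← weight, hw1, hw2, heq]

lemma Gstep
    (n : ℕ) (r d w : Fin n → ℤ) (p : ℕ) (hp : 1 ≤ p)
    (lam : ℤ → Fin n) (hlam : IsLam n r lam)
    (F : ℕ → Fin n → Fin n → ℤ) (G : ℕ → Fin n → ℕ → ℤ) (H : ℕ → Fin n → Fin n → ℤ)
    (hG : GRec n r d w p F G H) (hH : HRec n r p lam F G H)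
    (k : ℕ) (hk : k < n)
    (hPG : ∀ (i : Fin n) (a : ℕ), a ≤ n →
      ∃ J, KFeasible n r d p k (r i) (r i + (a : ℤ) * (p : ℤ)) J ∧ weight n w J = G k i a)
    (hPF : ∀ (i j : Fin n), r i ≤ r j →
      ∃ J, KFeasible n r d p k (r i) (r j) J ∧ weight n w J = F k i j) :
    ∀ (i : Fin n) (a : ℕ), a ≤ n →
      ∃ J, KFeasible n r d p (k+1) (r i) (r i + (a : ℤ) * (p : ℤ)) J ∧
        weight n w J = G (k+1) i a := by
  obtain ⟨hG0, hGskip, hGrec⟩ := hG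
  obtain ⟨hH0, hHrec⟩ := hH
  intro i a han
  have hpZ : (0:ℤ) < (p:ℤ) := by exact_mod_cast hp
  rcases Nat.eq_zero_or_pos a with rfl | ha1
  · exact ⟨∅, kfeas_empty _ _ _, by simp [weight, hG0 (k+1) 0 i (Or.inr rfl)]⟩
  set m : Fin n := ⟨k, hk⟩ with hm
  by_cases hcond : r i ≤ r m ∧ r m ≤ r i + ((a:ℤ) - 1) * (p:ℤ) ∧ r i + (a:ℤ) * (p:ℤ) ≤ d m
  case neg =>
    have hcc : ¬(r i ≤ r m ∧ r m ≤ r i + ((a:ℤ)-1) * (p:ℤ)) ∨ d m < r i + (a:ℤ) * (p:ℤ) := by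
      by_contra hcon
      push_neg at hcon
      exact hcond ⟨hcon.1.1, hcon.1.2, hcon.2⟩
    have heq := hGskip k a hk i ha1 han hcc
    obtain ⟨J, hJ, hw⟩ := hPG i a han
    exact ⟨J, kfeas_mono hJ (Nat.le_succ k) le_rfl le_rfl, by rw [hw, heq]⟩
  case pos =>
  obtain ⟨hA, hB, hC⟩ := hcond
  have hgr := hGrec k a hk i ha1 han hA hB hC
  rcases Set.mem_insert_iff.1 hgr.1 with h | h
  · -- G1
    obtain ⟨J, hJ, hw⟩ := hPG i a han
    exact ⟨J, kfeas_mono hJ (Nat.le_succ k) le_rfl le_rfl, by rw [hw, h]⟩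
  rcases Set.mem_insert_iff.1 h with h | h
  · -- G2 : G (k+1) i a = G k i (a-1) + w m
    obtain ⟨J, hJ, hw⟩ := hPG i (a-1) (le_trans (Nat.sub_le a 1) han)
    have hcast : ((a-1 : ℕ) : ℤ) = (a:ℤ) - 1 := by omega
    rw [hcast] at hJ
    obtain ⟨hf1, hf2, S, hS⟩ := hJ
    have hmJ : m ∉ J := by
      intro hmem
      have := hf1 m hmem
      simp [hm] at this
    set T : Finset ℤ := Finset.Ico (r i + ((a:ℤ)-1) * (p:ℤ)) (r i + (a:ℤ) * (p:ℤ)) with hT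
    have hTmem : ∀ t ∈ T, r i + ((a:ℤ)-1) * (p:ℤ) ≤ t ∧ t < r i + (a:ℤ) * (p:ℤ) := by
      intro t ht; exact Finset.mem_Ico.1 ht
    have hTcard : T.card = p := by
      rw [hT, Int.card_Ico]
      have : r i + (a:ℤ) * (p:ℤ) - (r i + ((a:ℤ)-1) * (p:ℤ)) = (p:ℤ) := by ring
      rw [this]
      exact Int.toNat_natCast p
    have ha1Z : (1:ℤ) ≤ (a:ℤ) := by exact_mod_cast ha1
    have h0 : (0:ℤ) ≤ ((a:ℤ)-1) * (p:ℤ) := mul_nonneg (by omega) (by omega)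
    have hstep : r i + (a:ℤ) * (p:ℤ) - (r i + ((a:ℤ)-1) * (p:ℤ)) = (p:ℤ) := by ring
    have hfull : IsFullScheduleIn n r d p (insert m J) (Function.update S m T)
        (r i) (r i + (a:ℤ) * (p:ℤ)) := by
      refine full_insert m hmJ T hTcard ?_ ?_ ?_ (full_mono hS le_rfl (by linarith))
      · intro t ht
        have := hTmem t ht
        exact ⟨by linarith [this.1], by linarith [this.2]⟩
      · intro t ht
        have := hTmem t ht
        exact ⟨by linarith [this.1], by linarith [this.2]⟩
      · intro j
        rw [Finset.disjoint_left]
        intro t ht hts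
        have h1 := (hTmem t ht).1
        have h2 := (hS.2.2.2 j t hts).2
        linarith
    refine ⟨insert m J, ⟨?_, ?_, _, hfull⟩, ?_⟩
    · intro q hq
      rcases Finset.mem_insert.1 hq with rfl | hq
      · simp [hm]
      · exact Nat.lt_succ_of_lt (hf1 q hq)
    · intro q hq
      rcases Finset.mem_insert.1 hq with rfl | hq
      · exact ⟨hA, by linarith⟩
      · have := hf2 q hq; exact ⟨this.1, by linarith [this.2]⟩
    · rw [weight, Finset.sum_insert hmJ, ← weight, hw, h]; ring
  · -- G3
    obtain ⟨l, hkl, hle, heq⟩ := h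
    set e : ℤ := r i + (a:ℤ) * (p:ℤ) with he
    have hil : r i < r l := lt_of_le_of_lt hA hkl
    have hH2 := hHrec k hk i l hA (le_of_lt hkl) hil
    obtain ⟨a', ha'n, ht1, ht2, hHeq⟩ := hH2.1
    set t' : ℤ := r i + (a':ℤ) * (p:ℤ) with ht'
    have hit' : r i ≤ t' := by
      have h0' : (0:ℤ) ≤ (a':ℤ) * (p:ℤ) := mul_nonneg (by positivity) (by positivity)
      linarith
    have hlm := hlam t' ⟨l, ht2⟩
    have hlam1 : t' ≤ r (lam t') := hlm.1
    have hlam2 : r (lam t') ≤ r l := hlm.2 l ht2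
    obtain ⟨Ja, hJa, hwa⟩ := hPG i a' ha'n
    obtain ⟨Jb, hJb, hwb⟩ := hPF (lam t') l hlam2
    set Δ : ℕ := Delta n p (r l) e with hΔ
    obtain ⟨J2, hJ2, hw2⟩ := hPG l Δ (min_le_left _ _)
    obtain ⟨fa1, fa2, Sa, hSa⟩ := hJa
    obtain ⟨fb1, fb2, Sb, hSb⟩ := hJb
    obtain ⟨f21, f22, S2, hS2⟩ := hJ2
    -- ceiling facts
    set c : ℤ := ⌈((e - r l : ℤ) : ℚ) / (p : ℚ)⌉ with hc
    have hB1 : (0:ℤ) < e - r l := by omega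
    have hpq : (0:ℚ) < (p:ℚ) := by exact_mod_cast hpZ
    have hc0 : 0 < c := by
      rw [hc]
      exact Int.ceil_pos.2 (div_pos (by exact_mod_cast hB1) hpq)
    have hc1p : ((c:ℤ) - 1) * (p:ℤ) < e - r l := by
      have h1 : ((c - 1 : ℤ) : ℚ) < ((e - r l : ℤ) : ℚ) / (p:ℚ) := by
        rw [← Int.lt_ceil, ← hc]; omega
      have h2 := (lt_div_iff₀ hpq).1 h1
      exact_mod_cast h2
    have hΔc : (Δ:ℤ) ≤ c - 1 := by
      have h1 : Δ ≤ (c - 1).toNat := by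
        rw [hΔ]; simp only [Delta]; rw [← hc]; exact min_le_right _ _
      omega
    -- cardinality bounds
    obtain ⟨hUb, hUbsub⟩ := sched_units hSb
    obtain ⟨hU2c, hU2sub⟩ := sched_units hS2
    have hjb : (Jb.card : ℤ) * (p:ℤ) ≤ r l - t' := by
      have h1 := sched_card_le hSb hlam2
      linarith
    have hΔp0 : (0:ℤ) ≤ (Δ:ℤ) * (p:ℤ) := mul_nonneg (by positivity) (by positivity)
    have hj2 : (J2.card : ℤ) ≤ (Δ:ℤ) := by
      have h2 := sched_card_le hS2 (by linarith : r l ≤ r l + (Δ:ℤ) * (p:ℤ))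
      have h3 : (J2.card:ℤ) * (p:ℤ) ≤ (Δ:ℤ) * (p:ℤ) := by linarith
      exact le_of_mul_le_mul_right h3 hpZ
    have hD : e - t' = ((a:ℤ) - (a':ℤ)) * (p:ℤ) := by rw [he, ht']; ring
    have hjc : (Jb.card:ℤ) + c ≤ (a:ℤ) - (a':ℤ) := by
      have e1 : ((Jb.card:ℤ) + c) * (p:ℤ)
          = (Jb.card:ℤ) * (p:ℤ) + ((c:ℤ) - 1) * (p:ℤ) + (p:ℤ) := by ring
      have e2 : (((a:ℤ) - (a':ℤ)) + 1) * (p:ℤ) = ((a:ℤ) - (a':ℤ)) * (p:ℤ) + (p:ℤ) := by ring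
      have h1 : ((Jb.card:ℤ) + c) * (p:ℤ) < (((a:ℤ) - (a':ℤ)) + 1) * (p:ℤ) := by
        rw [e1, e2]; linarith
      have h2 := lt_of_mul_lt_mul_right h1 (le_of_lt hpZ)
      omega
    have key : ((Jb.card * p : ℕ):ℤ) + ((J2.card * p : ℕ):ℤ) + (p:ℤ) ≤ e - t' := by
      push_cast
      have h1 : (J2.card:ℤ) + 1 ≤ c := by linarith
      have h2 : ((Jb.card:ℤ) + (J2.card:ℤ) + 1) * (p:ℤ) ≤ ((Jb.card:ℤ) + c) * (p:ℤ) :=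
        mul_le_mul_of_nonneg_right (by linarith) (by linarith)
      have h3 : ((Jb.card:ℤ) + c) * (p:ℤ) ≤ ((a:ℤ) - (a':ℤ)) * (p:ℤ) :=
        mul_le_mul_of_nonneg_right hjc (by linarith)
      have h4 : ((Jb.card:ℤ) + (J2.card:ℤ) + 1) * (p:ℤ)
          = (Jb.card:ℤ) * (p:ℤ) + (J2.card:ℤ) * (p:ℤ) + (p:ℤ) := by ring
      linarith
    classical
    set Ub := Finset.univ.biUnion Sb with hUbdef
    set U2 := Finset.univ.biUnion S2 with hU2def
    have hpR : p ≤ (Finset.Ico t' e \ (Ub ∪ U2)).card := by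
      have h1 := Finset.card_le_card_sdiff_add_card (s := Finset.Ico t' e) (t := Ub ∪ U2)
      have h2 : (Ub ∪ U2).card ≤ Jb.card * p + J2.card * p :=
        le_trans (Finset.card_union_le _ _) (by rw [hUb, hU2c])
      have h3 : (Finset.Ico t' e).card = (e - t').toNat := Int.card_Ico _ _
      set q1 := Jb.card * p
      set q2 := J2.card * p
      omega
    obtain ⟨T, hTsub, hTcard⟩ := Finset.exists_subset_card_eq hpR
    have hTmem : ∀ t ∈ T, t' ≤ t ∧ t < e ∧ t ∉ Ub ∧ t ∉ U2 := by
      intro t ht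
      have hmem := hTsub ht
      rw [Finset.mem_sdiff, Finset.mem_Ico, Finset.mem_union] at hmem
      exact ⟨hmem.1.1, hmem.1.2, fun hx => hmem.2 (Or.inl hx), fun hx => hmem.2 (Or.inr hx)⟩
    -- job-set disjointness
    have Dab : Disjoint Ja Jb := Finset.disjoint_left.2 (fun q hq hq2 => by
      have h1 := (fa2 q hq).2
      have h2 := (fb2 q hq2).1
      linarith)
    have Dab2 : Disjoint (Ja ∪ Jb) J2 := by
      refine Finset.disjoint_left.2 (fun q hq hq2 => ?_)
      have h2 := (f22 q hq2).1
      rcases Finset.mem_union.1 hq with hx | hx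
      · have := (fa2 q hx).2; linarith
      · have := (fb2 q hx).2; linarith
    have hU1 := full_union hSa hSb Dab hlam1 (by linarith) (by linarith)
    have hU2f := full_union hU1 hS2 Dab2 le_rfl (by linarith) (by linarith)
    have hrlΔ : r l + (Δ:ℤ) * (p:ℤ) ≤ e := by
      have := mul_le_mul_of_nonneg_right hΔc (le_of_lt hpZ)
      linarith
    have hU3 := full_mono hU2f le_rfl hrlΔ
    have hmJ3 : m ∉ (Ja ∪ Jb) ∪ J2 := by
      intro hmem
      rcases Finset.mem_union.1 hmem with hx | hx
      · rcases Finset.mem_union.1 hx with hy | hy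
        · exact absurd (fa1 m hy) (by simp [hm])
        · exact absurd (fb1 m hy) (by simp [hm])
      · exact absurd (f21 m hx) (by simp [hm])
    have hfull : IsFullScheduleIn n r d p (insert m ((Ja ∪ Jb) ∪ J2))
        (Function.update (fun j => (Sa j ∪ Sb j) ∪ S2 j) m T) (r i) e := by
      refine full_insert m hmJ3 T hTcard ?_ ?_ ?_ hU3
      · intro t ht
        have h1 := hTmem t ht
        exact ⟨by linarith [h1.1], by linarith [h1.2.1]⟩
      · intro t ht
        have h1 := hTmem t ht
        exact ⟨by linarith [h1.1], h1.2.1⟩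
      · intro j
        rw [Finset.disjoint_left]
        intro t ht hts
        have h1 := hTmem t ht
        rcases Finset.mem_union.1 hts with hx | hx
        · rcases Finset.mem_union.1 hx with hy | hy
          · have := (hSa.2.2.2 j t hy).2
            linarith [h1.1]
          · exact h1.2.2.1 (Finset.mem_biUnion.2 ⟨j, Finset.mem_univ j, hy⟩)
        · exact h1.2.2.2 (Finset.mem_biUnion.2 ⟨j, Finset.mem_univ j, hx⟩)
    refine ⟨insert m ((Ja ∪ Jb) ∪ J2), ⟨?_, ?_, _, hfull⟩, ?_⟩
    · intro q hq
      rcases Finset.mem_insert.1 hq with rfl | hq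
      · simp [hm]
      rcases Finset.mem_union.1 hq with hx | hx
      · rcases Finset.mem_union.1 hx with hy | hy
        · exact Nat.lt_succ_of_lt (fa1 q hy)
        · exact Nat.lt_succ_of_lt (fb1 q hy)
      · exact Nat.lt_succ_of_lt (f21 q hx)
    · intro q hq
      rcases Finset.mem_insert.1 hq with rfl | hq
      · exact ⟨hA, by linarith⟩
      rcases Finset.mem_union.1 hq with hx | hx
      · rcases Finset.mem_union.1 hx with hy | hy
        · have := fa2 q hy
          exact ⟨this.1, by linarith [this.2]⟩
        · have := fb2 q hy
          exact ⟨by linarith [this.1], by linarith [this.2]⟩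
      · have := f22 q hx
        exact ⟨by linarith [this.1], by linarith [this.2]⟩
    · have e1 : (∑ j ∈ Ja, w j) = G k i a' := hwa
      have e2 : (∑ j ∈ Jb, w j) = F k (lam t') l := hwb
      have e3 : (∑ j ∈ J2, w j) = G k l Δ := hw2
      rw [weight, Finset.sum_insert hmJ3, Finset.sum_union Dab2, Finset.sum_union Dab,
        e1, e2, e3, heq, hHeq]
      ring
/-- For every `k ∈ {0, …, n}` and all indices `i, j` with `r_i ≤ r_j`, there
exists a `(k, r_i, r_j)`-feasible set `J` of jobs with total weight
`w(J) = F^k_{i,j}`. -/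
theorem stmt0
    (n : ℕ) (r d w : Fin n → ℤ) (p : ℕ)
    (hn : 2 ≤ n) (hp : 1 ≤ p)
    (hw : ∀ j, 0 ≤ w j) (hd : ∀ j, r j + (p : ℤ) ≤ d j)
    (hsort : ∀ i j : Fin n, i ≤ j → d i ≤ d j)
    (hdummyw : w ⟨n - 1, by omega⟩ = 0)
    (hdummyr : r ⟨n - 1, by omega⟩ = d ⟨n - 2, by omega⟩)
    (lam lamp : ℤ → Fin n) (hlam : IsLam n r lam) (hlamp : IsLamPlus n r lamp)
    (F H : ℕ → Fin n → Fin n → ℤ) (G : ℕ → Fin n → ℕ → ℤ)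
    (hF : FRec n r p lam lamp F G) (hG : GRec n r d w p F G H)
    (hH : HRec n r p lam F G H) :
    ∀ k ≤ n, ∀ i j : Fin n, r i ≤ r j →
      ∃ J : Finset (Fin n),
        KFeasible n r d p k (r i) (r j) J ∧ weight n w J = F k i j := by
  have mainG : ∀ k, k ≤ n → ∀ (i : Fin n) (a : ℕ), a ≤ n →
      ∃ J, KFeasible n r d p k (r i) (r i + (a : ℤ) * (p : ℤ)) J ∧ weight n w J = G k i a := by
    intro k
    induction k with
    | zero =>
      intro _ i a _
      exact ⟨∅, kfeas_empty _ _ _, by simp [weight, hG.1 0 a i (Or.inl rfl)]⟩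
    | succ k ih =>
      intro hk i a han
      exact Gstep n r d w p hp lam hlam F G H hG hH k (by omega)
        (ih (by omega)) (FfromG n r d w p hp lam lamp hlam hlamp F G hF k (by omega) (ih (by omega)))
        i a han
  intro k hk i j hij
  exact FfromG n r d w p hp lam lamp hlam hlamp F G hF k hk (mainG k hk) i j hij
end

section
/- If a set J of jobs is feasible (i.e., some schedule completes every job of J), then the earliest-deadline schedule of J completes every job of J. -/
open Finset

/-- `S` is the earliest-deadline schedule of the job set `J`: it is a schedule
executing only jobs of `J`, giving each job at most `p` units, and whenever a
job `j ∈ J` is available at time `t` (released, not expired, and having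
received fewer than `p` units before `t`), some job `k` at least as urgent as
`j` (smaller deadline, ties broken in favor of the smaller index) is executed
at `t`. -/
def IsEDSchedule (n : ℕ) (r d : Fin n → ℤ) (p : ℕ) (J : Finset (Fin n))
    (S : Fin n → Finset ℤ) : Prop :=
  IsSchedule n r d S ∧
  (∀ j, j ∉ J → S j = ∅) ∧
  (∀ j, (S j).card ≤ p) ∧
  (∀ t : ℤ, ∀ j ∈ J, r j ≤ t → t < d j →
    ((S j).filter (fun u => u < t)).card < p →
    ∃ k ∈ J, t ∈ S k ∧ (d k < d j ∨ (d k = d j ∧ k ≤ j)))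

/-- If a set `J` of jobs is feasible (some schedule completes every job of `J`),
then the earliest-deadline schedule of `J` completes every job of `J`. -/
theorem stmt10
    (n : ℕ) (r d w : Fin n → ℤ) (p : ℕ)
    (hp : 1 ≤ p) (hw : ∀ j, 0 ≤ w j) (hd : ∀ j, r j + (p : ℤ) ≤ d j) :
    ∀ J : Finset (Fin n), Feasible n r d p J →
      ∀ S : Fin n → Finset ℤ, IsEDSchedule n r d p J S →
        ∀ j ∈ J, (S j).card = p := by
  intro J hfeas S hS j₀ hj₀
  obtain ⟨T, ⟨hTwin, hTdisj⟩, hTcard⟩ := hfeas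
  obtain ⟨⟨hSwin, hSdisj⟩, hSout, hSle, hED⟩ := hS
  by_contra hne
  have hj₀lt : (S j₀).card < p := lt_of_le_of_ne (hSle j₀) hne
  set D := d j₀ with hD
  have hJne : J.Nonempty := ⟨j₀, hj₀⟩
  set m := J.inf' hJne r - 1 with hm
  have hmlow : ∀ j ∈ J, ∀ t ∈ S j, m < t := by
    intro j hj t ht
    have h1 := (hSwin j t ht).1
    have h2 : J.inf' hJne r ≤ r j := Finset.inf'_le _ hj
    omega
  -- greatest time t0 < D at which S runs no deadline-≤ D job of J
  obtain ⟨t0, ⟨ht0D, ht0not⟩, ht0max⟩ :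
      ∃ t0 : ℤ, (t0 < D ∧ ¬ ∃ j ∈ J, d j ≤ D ∧ t0 ∈ S j) ∧
        ∀ z : ℤ, (z < D ∧ ¬ ∃ j ∈ J, d j ≤ D ∧ z ∈ S j) → z ≤ t0 := by
    apply Int.exists_greatest_of_bdd ⟨D, fun z hz => le_of_lt hz.1⟩
    refine ⟨m, ?_, ?_⟩
    · have h1 : J.inf' hJne r ≤ r j₀ := Finset.inf'_le _ hj₀
      have h2 := hd j₀
      omega
    · rintro ⟨j, hj, -, hjm⟩
      exact absurd rfl (ne_of_lt (hmlow j hj m hjm))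
  -- at t0 no deadline-≤ D job is available
  have havail : ∀ j ∈ J, r j ≤ t0 → t0 < d j → d j ≤ D →
      p ≤ ((S j).filter (fun u => u < t0)).card := by
    intro j hj hr hdt hdD
    by_contra h
    push_neg at h
    obtain ⟨k, hk, hkt, hkd⟩ := hED t0 j hj hr hdt h
    exact ht0not ⟨k, hk, by rcases hkd with h' | h' <;> omega, hkt⟩
  -- every slot in (t0, D) runs some deadline-≤ D job
  have hocc : ∀ t : ℤ, t0 < t → t < D → ∃ j ∈ J, d j ≤ D ∧ t ∈ S j := by
    intro t h1 h2
    by_contra h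
    exact absurd (ht0max t ⟨h2, h⟩) (by omega)
  classical
  set B : Finset (Fin n) := J.filter (fun j => d j ≤ D ∧ t0 < r j) with hB
  have hBJ : ∀ j ∈ B, j ∈ J := fun j hj => (Finset.mem_filter.1 hj).1
  have hj₀B : j₀ ∈ B := by
    refine Finset.mem_filter.2 ⟨hj₀, le_refl D, ?_⟩
    by_contra h
    push_neg at h
    have h1 := havail j₀ hj₀ h (by have := hd j₀; omega) (le_refl D)
    have h2 : ((S j₀).filter (fun u => u < t0)).card ≤ (S j₀).card :=
      Finset.card_filter_le _ _
    omega
  -- each slot in (t0, D) is occupied by a job of B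
  have hoccB : ∀ t ∈ Finset.Icc (t0 + 1) (D - 1), ∃ j ∈ B, t ∈ S j := by
    intro t ht
    rw [Finset.mem_Icc] at ht
    obtain ⟨j, hj, hjd, hjt⟩ := hocc t (by omega) (by omega)
    refine ⟨j, Finset.mem_filter.2 ⟨hj, hjd, ?_⟩, hjt⟩
    by_contra h
    push_neg at h
    have hwin := hSwin j t hjt
    have h1 := havail j hj h (by omega) hjd
    have h2 : ((S j).filter (fun u => u < t0)) ⊆ (S j).erase t := by
      intro u hu
      rw [Finset.mem_filter] at hu
      exact Finset.mem_erase.2 ⟨by omega, hu.1⟩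
    have h3 := Finset.card_le_card h2
    rw [Finset.card_erase_of_mem hjt] at h3
    have h4 := hSle j
    omega
  -- S side: slots (t0, D) ⊆ ⋃_{j ∈ B} S j
  have hsub : Finset.Icc (t0 + 1) (D - 1) ⊆ B.biUnion S := by
    intro t ht
    obtain ⟨j, hj, hjt⟩ := hoccB t ht
    exact Finset.mem_biUnion.2 ⟨j, hj, hjt⟩
  have hScount : (Finset.Icc (t0 + 1) (D - 1)).card ≤ ∑ j ∈ B, (S j).card := by
    calc (Finset.Icc (t0 + 1) (D - 1)).card ≤ (B.biUnion S).card :=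
          Finset.card_le_card hsub
      _ = ∑ j ∈ B, (S j).card :=
          Finset.card_biUnion (fun i _ j _ hij => hSdisj i j hij)
  have hSlt : ∑ j ∈ B, (S j).card < ∑ _j ∈ B, p :=
    Finset.sum_lt_sum (fun j _ => hSle j) ⟨j₀, hj₀B, hj₀lt⟩
  -- T side: ⋃_{j ∈ B} T j ⊆ slots (t0, D)
  have hTsub : B.biUnion T ⊆ Finset.Icc (t0 + 1) (D - 1) := by
    intro t ht
    obtain ⟨j, hj, hjt⟩ := Finset.mem_biUnion.1 ht
    obtain ⟨hj', hjd, hjr⟩ := Finset.mem_filter.1 hj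
    have hwin := hTwin j t hjt
    rw [Finset.mem_Icc]
    omega
  have hTcount : ∑ _j ∈ B, p ≤ (Finset.Icc (t0 + 1) (D - 1)).card := by
    calc ∑ _j ∈ B, p = ∑ j ∈ B, (T j).card :=
          Finset.sum_congr rfl (fun j hj => (hTcard j (hBJ j hj)).symm)
      _ = (B.biUnion T).card :=
          (Finset.card_biUnion (fun i _ j _ hij => hTdisj i j hij)).symm
      _ ≤ _ := Finset.card_le_card hTsub
  omega
end

section
/- Let J be a feasible set of jobs and S its earliest-deadline schedule. Then every block of S, i.e., every maximal interval [s,t) of consecutive busy time units, satisfies: s = r_i for some job i ∈ J executed in the block; every job executed within the block has release time at least s; and t − s = a·p, where a is the number of jobs executed within the block (each of which is completed within the block). -/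
open Finset

/-!
An earliest-deadline schedule `S` of a feasible set completes every job. Otherwise some job `j`
keeps being available, so every unit of `[r_j, d_j)` runs a job of higher ED-priority. Extend
this interval to the left as far as it stays filled by such jobs, to `[x, d_j)`: no job that runs
there was released before `x`, since it would have been available, and hence served, at `x - 1`.
All these jobs and `j` then have their windows inside `[x, d_j)`, which `S` fills without
completing `j`. So the feasible schedule would have to fit more work into `[x, d_j)` than the
interval has room for.

For a block `[s, t)`, a job that runs in the block and was released before `s`, or still has
work left after `t`, would have been available at the idle unit `s - 1`, resp. `t`. So the
block is exactly the disjoint union of the (complete) executions of its jobs.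
-/

theorem card_Ico_le_sum_card {ι : Type*} {S : ι → Finset ℤ} {C : Finset ι} {x y : ℤ}
    (hcover : ∀ v, x ≤ v → v < y → ∃ k ∈ C, v ∈ S k) :
    #(Ico x y) ≤ ∑ k ∈ C, #(S k) := by
  refine (card_le_card fun v hv => ?_).trans card_biUnion_le
  obtain ⟨k, hk, hvk⟩ := hcover v (mem_Ico.mp hv).1 (mem_Ico.mp hv).2
  exact mem_biUnion.mpr ⟨k, hk, hvk⟩

namespace IsSchedule

variable {n : ℕ} {r d : Fin n → ℤ} {S : Fin n → Finset ℤ}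

theorem eq_of_mem (hS : IsSchedule n r d S) {i j : Fin n} {u : ℤ}
    (hi : u ∈ S i) (hj : u ∈ S j) : i = j := by
  by_contra h
  exact disjoint_left.mp (hS.2 i j h) hi hj

theorem sum_card_le_card_Ico (hS : IsSchedule n r d S) {C : Finset (Fin n)} {x y : ℤ}
    (hin : ∀ k ∈ C, ∀ v ∈ S k, x ≤ v ∧ v < y) :
    ∑ k ∈ C, #(S k) ≤ #(Ico x y) := by
  rw [← card_biUnion fun a _ b _ hab => hS.2 a b hab]
  refine card_le_card fun v hv => ?_
  obtain ⟨k, hk, hvk⟩ := mem_biUnion.mp hv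
  exact mem_Ico.mpr (hin k hk v hvk)

end IsSchedule

namespace IsEDSchedule

variable {n : ℕ} {r d : Fin n → ℤ} {p : ℕ} {J : Finset (Fin n)} {S : Fin n → Finset ℤ}

theorem mem_of_mem (hS : IsEDSchedule n r d p J S) {j : Fin n} {u : ℤ} (hu : u ∈ S j) :
    j ∈ J := by
  by_contra hj
  simp [hS.2.1 j hj] at hu

theorem exists_mem_of_available (hS : IsEDSchedule n r d p J S) {j : Fin n} {t : ℤ}
    (hj : j ∈ J) (hrt : r j ≤ t) (htd : t < d j) (hleft : #((S j).filter (· < t)) < p) :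
    ∃ k, t ∈ S k ∧ toLex (d k, k) ≤ toLex (d j, j) := by
  obtain ⟨k, -, hk, hprec⟩ := hS.2.2.2 t j hj hrt htd hleft
  exact ⟨k, hk, Prod.Lex.toLex_le_toLex.mpr hprec⟩

/-- A job released by `t` that still runs at some `u ≥ t` is available at `t`. -/
theorem exists_mem_of_le_of_mem (hS : IsEDSchedule n r d p J S) {j : Fin n} {t u : ℤ}
    (hu : u ∈ S j) (hrt : r j ≤ t) (htu : t ≤ u) :
    ∃ k, t ∈ S k ∧ toLex (d k, k) ≤ toLex (d j, j) := by
  refine hS.exists_mem_of_available (hS.mem_of_mem hu) hrt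
    (htu.trans_lt (hS.1.1 j u hu).2) ((card_lt_card ?_).trans_le (hS.2.2.1 j))
  exact filter_ssubset.mpr ⟨u, hu, not_lt.mpr htu⟩

theorem exists_saturated_interval (hS : IsEDSchedule n r d p J S) {j : Fin n} (hj : j ∈ J)
    (hlt : #(S j) < p) :
    ∃ x ≤ r j, (∀ v, x ≤ v → v < d j → ∃ k, v ∈ S k ∧ toLex (d k, k) ≤ toLex (d j, j)) ∧
      ∀ k, ∀ u ∈ S k, x ≤ u → u < d j → x ≤ r k := by
  set Filled : ℤ → Prop :=
    fun x => ∀ v, x ≤ v → v < d j → ∃ k, v ∈ S k ∧ toLex (d k, k) ≤ toLex (d j, j)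
  have hfilled : Filled (r j) := fun v hv hvd =>
    hS.exists_mem_of_available hj hv hvd ((card_filter_le _ _).trans_lt hlt)
  obtain ⟨b, hb⟩ := (Set.finite_range r).bddBelow
  have hbdd : ∃ b, ∀ z, z ≤ r j ∧ Filled z → b ≤ z := by
    refine ⟨min b (d j), fun z ⟨_, hz⟩ => ?_⟩
    rcases lt_or_ge z (d j) with hzd | hzd
    · obtain ⟨k, hk, -⟩ := hz z le_rfl hzd
      exact (min_le_left _ _).trans ((hb ⟨k, rfl⟩).trans (hS.1.1 k z hk).1)
    · exact (min_le_right _ _).trans hzd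
  obtain ⟨x, ⟨hxr, hx⟩, hleast⟩ := Int.exists_least_of_bdd hbdd ⟨r j, le_rfl, hfilled⟩
  refine ⟨x, hxr, hx, fun k u hu hxu hud => ?_⟩
  by_contra! hrk
  obtain ⟨k', hk'u, hk'⟩ := hx u hxu hud
  obtain rfl : k' = k := hS.1.eq_of_mem hk'u hu
  -- `k` is available at `x - 1`, so `[x - 1, d_j)` is filled as well
  have hfilled' : Filled (x - 1) := by
    intro v hv hvd
    rcases hv.eq_or_lt with rfl | hv
    · obtain ⟨k₂, hk₂, hprec⟩ := hS.exists_mem_of_le_of_mem (t := x - 1) hu (by omega) (by omega)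
      exact ⟨k₂, hk₂, hprec.trans hk'⟩
    · exact hx v (by omega) hvd
  have := hleast (x - 1) ⟨by omega, hfilled'⟩
  omega

theorem card_eq_of_feasible (hS : IsEDSchedule n r d p J S) (hfeas : Feasible n r d p J) :
    ∀ j ∈ J, #(S j) = p := by
  intro j hj
  by_contra hne
  have hlt : #(S j) < p := (hS.2.2.1 j).lt_of_ne hne
  obtain ⟨x, hxr, hfilled, hrel⟩ := hS.exists_saturated_interval hj hlt
  set B := univ.filter fun k => ∃ u ∈ S k, x ≤ u ∧ u < d j
  have hB : ∀ k ∈ B, k ∈ J ∧ x ≤ r k ∧ d k ≤ d j := by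
    intro k hk
    obtain ⟨u, hu, hxu, hud⟩ := (mem_filter.mp hk).2
    obtain ⟨k', hk'u, hk'⟩ := hfilled u hxu hud
    rw [hS.1.eq_of_mem hk'u hu] at hk'
    exact ⟨hS.mem_of_mem hu, hrel k u hu hxu hud, Prod.Lex.monotone_fst _ _ hk'⟩
  have hC : ∀ k ∈ insert j B, k ∈ J ∧ x ≤ r k ∧ d k ≤ d j := by
    intro k hk
    rcases mem_insert.mp hk with rfl | hk
    · exact ⟨hj, hxr, le_rfl⟩
    · exact hB k hk
  obtain ⟨T, hT, hTcard⟩ := hfeas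
  have hroom : #(insert j B) * p ≤ #(Ico x (d j)) := by
    calc #(insert j B) * p = ∑ k ∈ insert j B, #(T k) := by
          rw [sum_congr rfl fun k hk => hTcard k (hC k hk).1, sum_const, smul_eq_mul]
      _ ≤ #(Ico x (d j)) := hT.sum_card_le_card_Ico fun k hk v hv =>
          ⟨(hC k hk).2.1.trans (hT.1 k v hv).1, (hT.1 k v hv).2.trans_le (hC k hk).2.2⟩
  have hwork : #(Ico x (d j)) < #(insert j B) * p := by
    calc #(Ico x (d j)) ≤ ∑ k ∈ B, #(S k) := card_Ico_le_sum_card fun v hxv hvd => by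
          obtain ⟨k, hk, -⟩ := hfilled v hxv hvd
          exact ⟨k, mem_filter.mpr ⟨mem_univ k, v, hk, hxv, hvd⟩, hk⟩
      _ ≤ ∑ k ∈ insert j B, #(S k) := sum_le_sum_of_subset (subset_insert j B)
      _ < ∑ _k ∈ insert j B, p :=
          sum_lt_sum (fun k _ => hS.2.2.1 k) ⟨j, mem_insert_self j B, hlt⟩
      _ = #(insert j B) * p := by rw [sum_const, smul_eq_mul]
  omega

theorem le_release_of_idle (hS : IsEDSchedule n r d p J S) {s : ℤ}
    (hidle : ¬ ∃ k, s - 1 ∈ S k) {j : Fin n} {u : ℤ} (hu : u ∈ S j) (hsu : s ≤ u) :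
    s ≤ r j := by
  by_contra! hrs
  obtain ⟨k, hk, -⟩ := hS.exists_mem_of_le_of_mem (t := s - 1) hu (by omega) (by omega)
  exact hidle ⟨k, hk⟩

theorem lt_of_idle (hS : IsEDSchedule n r d p J S) {t : ℤ} (hidle : ¬ ∃ k, t ∈ S k)
    {j : Fin n} {u v : ℤ} (hu : u ∈ S j) (hut : u < t) (hv : v ∈ S j) : v < t := by
  by_contra! htv
  obtain ⟨k, hk, -⟩ := hS.exists_mem_of_le_of_mem hv ((hS.1.1 j u hu).1.trans hut.le) htv
  exact hidle ⟨k, hk⟩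

end IsEDSchedule

theorem stmt11_general
    (n : ℕ) (r d : Fin n → ℤ) (p : ℕ) :
    ∀ J : Finset (Fin n), Feasible n r d p J →
    ∀ S : Fin n → Finset ℤ, IsEDSchedule n r d p J S →
    ∀ s t : ℤ, s < t →
      (∀ u : ℤ, s ≤ u → u < t → ∃ j : Fin n, u ∈ S j) →
      (¬ ∃ j : Fin n, s - 1 ∈ S j) →
      (¬ ∃ j : Fin n, t ∈ S j) →
      ((∃ i ∈ J, s = r i ∧ ∃ u ∈ S i, s ≤ u ∧ u < t) ∧
       (∀ j : Fin n, (∃ u ∈ S j, s ≤ u ∧ u < t) → s ≤ r j) ∧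
       (∃ B : Finset (Fin n),
         (∀ j : Fin n, j ∈ B ↔ ∃ u ∈ S j, s ≤ u ∧ u < t) ∧
         t - s = (B.card : ℤ) * (p : ℤ) ∧
         ∀ j ∈ B, (S j).card = p ∧ ∀ u ∈ S j, s ≤ u ∧ u < t)) := by
  intro J hfeas S hS s t hst hbusy hidle_s hidle_t
  have hrel : ∀ j, (∃ u ∈ S j, s ≤ u ∧ u < t) → s ≤ r j :=
    fun j ⟨u, hu, hsu, _⟩ => hS.le_release_of_idle hidle_s hu hsu
  have hin : ∀ j, (∃ u ∈ S j, s ≤ u ∧ u < t) → ∀ v ∈ S j, s ≤ v ∧ v < t :=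
    fun j ⟨u, hu, hsu, hut⟩ v hv =>
      ⟨(hrel j ⟨u, hu, hsu, hut⟩).trans (hS.1.1 j v hv).1, hS.lt_of_idle hidle_t hu hut hv⟩
  obtain ⟨i, hi⟩ := hbusy s le_rfl hst
  have hi_block : ∃ u ∈ S i, s ≤ u ∧ u < t := ⟨s, hi, le_rfl, hst⟩
  refine ⟨⟨i, hS.mem_of_mem hi, (hrel i hi_block).antisymm (hS.1.1 i s hi).1, hi_block⟩,
    hrel, ?_⟩
  set B := univ.filter fun j => ∃ u ∈ S j, s ≤ u ∧ u < t
  have hmemB : ∀ j, j ∈ B ↔ ∃ u ∈ S j, s ≤ u ∧ u < t := by simp [B]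
  have hcomplete : ∀ j ∈ B, #(S j) = p := fun j hj =>
    hS.card_eq_of_feasible hfeas j (hS.mem_of_mem ((hmemB j).mp hj).choose_spec.1)
  have hlen : #(Ico s t) = ∑ j ∈ B, #(S j) :=
    (card_Ico_le_sum_card fun v hsv hvt =>
        let ⟨j, hj⟩ := hbusy v hsv hvt
        ⟨j, (hmemB j).mpr ⟨v, hj, hsv, hvt⟩, hj⟩).antisymm
      (hS.1.sum_card_le_card_Ico fun j hj => hin j ((hmemB j).mp hj))
  rw [sum_congr rfl hcomplete, sum_const, smul_eq_mul, Int.card_Ico] at hlen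
  refine ⟨B, hmemB, by omega, fun j hj => ⟨hcomplete j hj, hin j ((hmemB j).mp hj)⟩⟩

/-- Let `J` be a feasible set of jobs and `S` its earliest-deadline schedule.
Then every block of `S` (maximal interval `[s, t)` of consecutive busy time
units) satisfies: `s = r_i` for some job `i ∈ J` executed in the block; every
job executed within the block has release time at least `s`; and `t - s = a·p`
where `a` is the number of jobs executed within the block, each of which is
completed within the block. -/
theorem stmt11
    (n : ℕ) (r d w : Fin n → ℤ) (p : ℕ)
    (hp : 1 ≤ p) (hw : ∀ j, 0 ≤ w j) (hd : ∀ j, r j + (p : ℤ) ≤ d j) :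
    ∀ J : Finset (Fin n), Feasible n r d p J →
    ∀ S : Fin n → Finset ℤ, IsEDSchedule n r d p J S →
    ∀ s t : ℤ, s < t →
      (∀ u : ℤ, s ≤ u → u < t → ∃ j : Fin n, u ∈ S j) →
      (¬ ∃ j : Fin n, s - 1 ∈ S j) →
      (¬ ∃ j : Fin n, t ∈ S j) →
      ((∃ i ∈ J, s = r i ∧ ∃ u ∈ S i, s ≤ u ∧ u < t) ∧
       (∀ j : Fin n, (∃ u ∈ S j, s ≤ u ∧ u < t) → s ≤ r j) ∧
       (∃ B : Finset (Fin n),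
         (∀ j : Fin n, j ∈ B ↔ ∃ u ∈ S j, s ≤ u ∧ u < t) ∧
         t - s = (B.card : ℤ) * (p : ℤ) ∧
         ∀ j ∈ B, (S j).card = p ∧ ∀ u ∈ S j, s ≤ u ∧ u < t)) :=
  stmt11_general n r d p
end
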